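/- arXiv:2604.15218 — 4 statements merged into one kernel-verified Lean document; each statement's English description precedes it below -/
import Mathlib

section
/- Let $V, V'$ be finite-dimensional vector spaces over a field $\mathbb{F}$, let $U, W, V_1$ be subspaces of $V$, and let $M : V \to V'$ be a surjective linear map with kernel $W$. Then $\dim((U+W) \cap V_1) - \dim(W \cap V_1) = \dim(M(U) \cap M(V_1))$. -/
theorem stmt_0 {F V V' : Type*} [Field F]
    [AddCommGroup V] [Module F V] [FiniteDimensional F V]
    [AddCommGroup V'] [Module F V'] [FiniteDimensional F V']
    (U W V₁ : Submodule F V) (M : V →ₗ[F] V')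
    (hsurj : Function.Surjective M) (hker : LinearMap.ker M = W) :
    (Module.finrank F ↥((U ⊔ W) ⊓ V₁) : ℤ) - Module.finrank F ↥(W ⊓ V₁)
      = Module.finrank F ↥(U.map M ⊓ V₁.map M) := by
  set X : Submodule F V := (U ⊔ W) ⊓ V₁ with hX
  -- image of X equals M(U) ⊓ M(V₁)
  have himg : X.map M = U.map M ⊓ V₁.map M := by
    apply le_antisymm
    · refine le_inf ?_ ?_
      · have hW0 : W.map M = ⊥ := by
          rw [eq_bot_iff]
          rintro y ⟨x, hx, rfl⟩
          rw [← hker] at hx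
          simpa using hx
        have : X.map M ≤ (U ⊔ W).map M := Submodule.map_mono inf_le_left
        rwa [Submodule.map_sup, hW0, sup_bot_eq] at this
      · exact Submodule.map_mono inf_le_right
    · rintro y ⟨⟨u, hu, rfl⟩, ⟨v, hv, hvy⟩⟩
      refine ⟨v, ⟨?_, hv⟩, hvy⟩
      have : v - u ∈ W := by
        rw [← hker]; simp [LinearMap.mem_ker, map_sub, hvy]
      have : v = u + (v - u) := by abel
      rw [this]
      exact Submodule.mem_sup.mpr ⟨u, hu, v - u, ‹v - u ∈ W›, rfl⟩
  -- rank-nullity for M restricted to X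
  have hres : Module.finrank F ↥(X.map M) + Module.finrank F ↥(W ⊓ V₁)
      = Module.finrank F ↥X := by
    have h1 := LinearMap.finrank_range_add_finrank_ker (M.comp X.subtype)
    have hr : LinearMap.range (M.comp X.subtype) = X.map M := by
      rw [LinearMap.range_comp, Submodule.range_subtype]
    have hWX : W ⊓ X = W ⊓ V₁ := by
      rw [hX, ← inf_assoc, inf_of_le_left (le_sup_right : W ≤ U ⊔ W)]
    have hk : LinearMap.ker (M.comp X.subtype) = Submodule.comap X.subtype (W ⊓ X) := by
      rw [LinearMap.ker_comp, hker]
      ext x; simp [Submodule.mem_comap, x.2]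
    have hek : Module.finrank F ↥(LinearMap.ker (M.comp X.subtype))
        = Module.finrank F ↥(W ⊓ V₁) := by
      rw [hk]
      rw [← hWX]
      exact (Submodule.comapSubtypeEquivOfLe inf_le_right).finrank_eq
    rw [hr, hek] at h1
    exact h1
  rw [himg] at hres
  omega
end

section
/- Let $V, V'$ be finite-dimensional vector spaces over a field $\mathbb{F}$, let $U, V_1, \dots, V_n$ be subspaces of $V$, let $M : V \to V'$ be a surjective linear map with kernel $W$, and let $\alpha \in \mathbb{R}$. Define the potential $\Phi_V(U, (V_1,\dots,V_n), \alpha) = \alpha \dim(U) - \frac{1}{n}\sum_{i=1}^n (\dim(U) - \dim(U \cap V_i))$. Then $\Phi_V(U+W, (V_1,\dots,V_n), \alpha) - \Phi_V(W, (V_1,\dots,V_n), \alpha) = \Phi_{V'}(M(U), (M(V_1),\dots,M(V_n)), \alpha)$. -/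
/-- The potential function Φ_V(U, (V₁,…,Vₙ), α). -/
noncomputable def Phi (F : Type*) [Field F] {V : Type*} [AddCommGroup V] [Module F V]
    {n : ℕ} (U : Submodule F V) (Vs : Fin n → Submodule F V) (α : ℝ) : ℝ :=
  α * (Module.finrank F ↥U : ℝ) -
    (1 / n) * ∑ i, ((Module.finrank F ↥U : ℝ) - (Module.finrank F ↥(U ⊓ Vs i) : ℝ))

open Module Submodule in
/-- Rank of the image of a submodule containing the kernel. -/
lemma map_finrank_key {F V V' : Type*} [Field F]
    [AddCommGroup V] [Module F V] [FiniteDimensional F V]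
    [AddCommGroup V'] [Module F V'] (M : V →ₗ[F] V')
    (P : Submodule F V) (hWP : LinearMap.ker M ≤ P) :
    finrank F (P.map M) + finrank F (LinearMap.ker M) = finrank F P := by
  have h1 : P.map M = LinearMap.range (M ∘ₗ P.subtype) := by
    rw [LinearMap.range_comp, Submodule.range_subtype]
  have h2 := LinearMap.finrank_range_add_finrank_ker (M ∘ₗ P.subtype)
  have h3 : LinearMap.ker (M ∘ₗ P.subtype) = comap P.subtype (LinearMap.ker M) := by
    rw [LinearMap.ker_comp]
  have h4 : finrank F ↥(comap P.subtype (LinearMap.ker M))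
      = finrank F ↥(P ⊓ LinearMap.ker M) := by
    rw [← Submodule.finrank_map_subtype_eq, Submodule.map_comap_subtype]
  have h5 : P ⊓ LinearMap.ker M = LinearMap.ker M := inf_eq_right.mpr hWP
  rw [h1, ← h2, h3, h4, h5]

open Module Submodule in
theorem stmt_1 {F V V' : Type*} [Field F]
    [AddCommGroup V] [Module F V] [FiniteDimensional F V]
    [AddCommGroup V'] [Module F V'] [FiniteDimensional F V']
    {n : ℕ} (hn : 0 < n)
    (U W : Submodule F V) (Vs : Fin n → Submodule F V) (M : V →ₗ[F] V')
    (hsurj : Function.Surjective M) (hker : LinearMap.ker M = W) (α : ℝ) :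
    Phi F (U ⊔ W) Vs α - Phi F W Vs α
      = Phi F (U.map M) (fun i => (Vs i).map M) α := by
  subst hker
  have hmapW : (LinearMap.ker M).map M = ⊥ := by
    rw [eq_bot_iff, Submodule.map_le_iff_le_comap]
    intro x hx
    simpa using hx
  have hmapU : U.map M = (U ⊔ LinearMap.ker M).map M := by
    rw [Submodule.map_sup, hmapW, sup_bot_eq]
  have hA : (finrank F ↥(U.map M) : ℝ)
      = finrank F ↥(U ⊔ LinearMap.ker M) - finrank F ↥(LinearMap.ker M) := by
    have hkey := map_finrank_key M (U ⊔ LinearMap.ker M) le_sup_right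
    rw [hmapU, eq_sub_iff_add_eq]
    exact_mod_cast hkey
  have hi : ∀ i, (finrank F ↥(U.map M ⊓ (Vs i).map M) : ℝ)
      = finrank F ↥((U ⊔ LinearMap.ker M) ⊓ Vs i)
        - finrank F ↥(LinearMap.ker M ⊓ Vs i) := by
    intro i
    have hinf : U.map M ⊓ (Vs i).map M
        = (LinearMap.ker M ⊔ (Vs i ⊓ (U ⊔ LinearMap.ker M))).map M := by
      conv_lhs => rw [← Submodule.map_comap_eq_of_surjective hsurj
        (U.map M ⊓ (Vs i).map M)]
      rw [Submodule.comap_inf, Submodule.comap_map_eq, Submodule.comap_map_eq,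
        inf_comm, sup_comm (Vs i) (LinearMap.ker M),
        sup_inf_assoc_of_le (Vs i) (le_sup_right : LinearMap.ker M ≤ U ⊔ LinearMap.ker M)]
    have hkey := map_finrank_key M
      (LinearMap.ker M ⊔ (Vs i ⊓ (U ⊔ LinearMap.ker M))) le_sup_left
    have hsup := Submodule.finrank_sup_add_finrank_inf_eq
      (LinearMap.ker M) (Vs i ⊓ (U ⊔ LinearMap.ker M))
    have hWi : LinearMap.ker M ⊓ (Vs i ⊓ (U ⊔ LinearMap.ker M))
        = LinearMap.ker M ⊓ Vs i := by
      rw [← inf_assoc]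
      exact inf_eq_left.mpr (le_trans inf_le_left le_sup_right)
    have hc : (U ⊔ LinearMap.ker M) ⊓ Vs i = Vs i ⊓ (U ⊔ LinearMap.ker M) := inf_comm _ _
    rw [hWi] at hsup
    rw [hinf, eq_sub_iff_add_eq, hc]
    have : finrank F ↥((LinearMap.ker M ⊔ Vs i ⊓ (U ⊔ LinearMap.ker M)).map M)
        + finrank F ↥(LinearMap.ker M ⊓ Vs i)
        = finrank F ↥(Vs i ⊓ (U ⊔ LinearMap.ker M)) := by omega
    exact_mod_cast this
  simp only [Phi, hA]
  have hsum : ∑ x, ((finrank F ↥(U ⊔ LinearMap.ker M) : ℝ)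
        - (finrank F ↥(LinearMap.ker M) : ℝ)
        - (finrank F ↥(U.map M ⊓ (Vs x).map M) : ℝ))
      = (∑ i, ((finrank F ↥(U ⊔ LinearMap.ker M) : ℝ)
            - (finrank F ↥((U ⊔ LinearMap.ker M) ⊓ Vs i) : ℝ)))
        - ∑ i, ((finrank F ↥(LinearMap.ker M) : ℝ)
            - (finrank F ↥(LinearMap.ker M ⊓ Vs i) : ℝ)) := by
    rw [← Finset.sum_sub_distrib]
    exact Finset.sum_congr rfl fun i _ => by rw [hi i]; ring
  rw [hsum]
  ring
end

section
/- Let $V$ be a finite-dimensional vector space over a field $\mathbb{F}$, $(V_1,\dots,V_n)$ subspaces of $V$, and $\alpha \in \mathbb{R}$. If $\Phi_V(V, (V_1,\dots,V_n), \alpha) < 0$, then there exists a subspace $W \subsetneq V$ such that for every subspace $U$ of $V$ with $U \not\subseteq W$, we have $\Phi_V(U + W, (V_1,\dots,V_n), \alpha) - \Phi_V(W, (V_1,\dots,V_n), \alpha) < 0$. -/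
/-!
Φ only depends on the finitely many possible values of `finrank U` and `finrank (U ⊓ Vᵢ)`,
so it takes finitely many values. Choose `W` maximizing Φ and, among the maximizers, `finrank W`.
Since Φ(⊥) = 0 > Φ(⊤), `W ≠ ⊤`. If `U ⊄ W`, then `W < U ⊔ W`, so `U ⊔ W` has larger dimension
and therefore cannot be a maximizer: Φ(U ⊔ W) < Φ(W).
-/

lemma exists_forall_toLex_le {ι α β : Type*} [Nonempty ι] [LinearOrder α] [LinearOrder β]
    (f : ι → α) (g : ι → β) (hf : (Set.range f).Finite) (hg : (Set.range g).Finite) :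
    ∃ w, ∀ u, toLex (f u, g u) ≤ toLex (f w, g w) := by
  have hfin : (Set.range fun u => toLex (f u, g u)).Finite :=
    ((hf.prod hg).image toLex).subset <| by
      rintro _ ⟨u, rfl⟩
      exact ⟨(f u, g u), ⟨⟨u, rfl⟩, ⟨u, rfl⟩⟩, rfl⟩
  obtain ⟨_, ⟨w, rfl⟩, hw⟩ :=
    Set.exists_max_image _ id hfin (Set.range_nonempty fun u => toLex (f u, g u))
  exact ⟨w, fun u => hw _ ⟨u, rfl⟩⟩

section Potential

variable {F V : Type*} [Field F] [AddCommGroup V] [Module F V] {n : ℕ}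

lemma finite_range_finrank_submodule [FiniteDimensional F V] :
    (Set.range fun U : Submodule F V => Module.finrank F U).Finite :=
  (Set.finite_Iic (Module.finrank F V)).subset <| by
    rintro _ ⟨U, rfl⟩
    exact Submodule.finrank_le U

lemma finite_range_Phi [FiniteDimensional F V] (Vs : Fin n → Submodule F V) (α : ℝ) :
    (Set.range fun U : Submodule F V => Phi F U Vs α).Finite := by
  set D := Module.finrank F V
  refine (((Set.finite_Iic D).prod (Set.Finite.pi fun _ => Set.finite_Iic D)).image
    fun p : ℕ × (Fin n → ℕ) => α * p.1 - (1 / (n : ℝ)) * ∑ i, ((p.1 : ℝ) - p.2 i)).subset ?_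
  rintro _ ⟨U, rfl⟩
  exact ⟨(Module.finrank F U, fun i => Module.finrank F ↥(U ⊓ Vs i)),
    ⟨Submodule.finrank_le U, fun i _ => Submodule.finrank_le _⟩, rfl⟩

@[simp]
lemma Phi_bot (Vs : Fin n → Submodule F V) (α : ℝ) : Phi F ⊥ Vs α = 0 := by
  simp only [Phi, finrank_bot, Nat.cast_zero, mul_zero, zero_sub, neg_eq_zero, mul_eq_zero]
  exact .inr <| Finset.sum_eq_zero fun i _ => by
    rw [bot_inf_eq, finrank_bot, Nat.cast_zero, neg_zero]

end Potential

theorem stmt_5_general {F V : Type*} [Field F]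
    [AddCommGroup V] [Module F V] [FiniteDimensional F V]
    {n : ℕ} (Vs : Fin n → Submodule F V) (α : ℝ)
    (h : Phi F (⊤ : Submodule F V) Vs α < 0) :
    ∃ W : Submodule F V, W ≠ ⊤ ∧
      ∀ U : Submodule F V, ¬ U ≤ W → Phi F (U ⊔ W) Vs α - Phi F W Vs α < 0 := by
  obtain ⟨W, hW⟩ := exists_forall_toLex_le (fun U => Phi F U Vs α)
    (fun U => Module.finrank F U) (finite_range_Phi Vs α) finite_range_finrank_submodule
  have hPhi_le (U : Submodule F V) : Phi F U Vs α ≤ Phi F W Vs α :=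
    Prod.Lex.monotone_fst _ _ (hW U)
  refine ⟨W, ?_, fun U hU => ?_⟩
  · rintro rfl
    linarith [hPhi_le ⊥, Phi_bot (F := F) Vs α]
  have hlt : W < U ⊔ W := right_lt_sup.mpr hU
  have hne : Phi F (U ⊔ W) Vs α ≠ Phi F W Vs α := fun heq =>
    (Submodule.finrank_lt_finrank_of_lt hlt).not_ge ((Prod.Lex.le_iff.mp (hW _)).resolve_left
      heq.not_lt).2
  linarith [lt_of_le_of_ne (hPhi_le (U ⊔ W)) hne]

theorem stmt_5 {F V : Type*} [Field F]
    [AddCommGroup V] [Module F V] [FiniteDimensional F V]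
    {n : ℕ} (hn : 0 < n) (Vs : Fin n → Submodule F V) (α : ℝ)
    (h : Phi F (⊤ : Submodule F V) Vs α < 0) :
    ∃ W : Submodule F V, W ≠ ⊤ ∧
      ∀ U : Submodule F V, ¬ U ≤ W → Phi F (U ⊔ W) Vs α - Phi F W Vs α < 0 :=
  stmt_5_general Vs α h
end

section
/- Let $\mathrm{Enc}_1,\dots,\mathrm{Enc}_n : \mathbb{F}_q^k \to \mathbb{F}_q^s$ be linear maps with $\mathrm{Enc} = (\mathrm{Enc}_1,\dots,\mathrm{Enc}_n)$ injective, and let $\mathcal{C} = \{(\mathrm{Enc}_1(x),\dots,\mathrm{Enc}_n(x)) \mid x \in \mathbb{F}_q^k\}$. Suppose there exists a subspace $A \subseteq \mathbb{F}_q^k$ of dimension at most $r$, a vector space $V$, an isomorphism $\varphi : V \to A^*$, and subspaces $V_1,\dots,V_n \subseteq V$ such that $\varphi(V_i)^\circ \subseteq \ker(\mathrm{Enc}_i)$ for all $i$ and $\Phi_V(V, (V_1,\dots,V_n), \tau(r)) < 0$. Then $\mathcal{C}$ is not a $\tau$-subspace design code; specifically, $\frac{1}{n}\sum_{i=1}^n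 \dim(A \cap \ker(\mathrm{Enc}_i)) > \tau(r) \cdot \dim(A)$. -/
theorem stmt_10 {F : Type*} [Field F] [Fintype F] {n k s r : ℕ} (hn : 0 < n)
    (Enc : Fin n → ((Fin k → F) →ₗ[F] (Fin s → F)))
    (hinj : Function.Injective (fun x (i : Fin n) => Enc i x))
    (τ : ℕ → ℝ)
    (A : Submodule F (Fin k → F)) (hA : Module.finrank F ↥A ≤ r)
    (V : Type*) [AddCommGroup V] [Module F V]
    (φ : V ≃ₗ[F] Module.Dual F ↥A) (Vs : Fin n → Submodule F V)
    (hker : ∀ i, (((Vs i).map φ.toLinearMap).dualCoannihilator).map A.subtype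
      ≤ LinearMap.ker (Enc i))
    (hΦ : Phi F (⊤ : Submodule F V) Vs (τ r) < 0) :
    (1 / n : ℝ) * ∑ i, (Module.finrank F ↥(A ⊓ LinearMap.ker (Enc i)) : ℝ)
      > τ r * Module.finrank F ↥A := by
  haveI : FiniteDimensional F ↥A := inferInstance
  haveI : FiniteDimensional F V := LinearEquiv.finiteDimensional φ.symm
  have hdimV : Module.finrank F V = Module.finrank F ↥A := by
    rw [φ.finrank_eq, Subspace.dual_finrank_eq]
  -- key per-index bound
  have key : ∀ i : Fin n,
      (Module.finrank F V : ℝ) - (Module.finrank F ↥((⊤ : Submodule F V) ⊓ Vs i) : ℝ)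
        ≤ (Module.finrank F ↥(A ⊓ LinearMap.ker (Enc i)) : ℝ) := by
    intro i
    have h1 : Module.finrank F ↥((Vs i).map φ.toLinearMap) = Module.finrank F ↥(Vs i) :=
      LinearEquiv.finrank_map_eq φ (Vs i)
    have h2 := Subspace.finrank_add_finrank_dualCoannihilator_eq ((Vs i).map φ.toLinearMap)
    have h3 : Module.finrank F
        ↥((((Vs i).map φ.toLinearMap).dualCoannihilator).map A.subtype)
        = Module.finrank F ↥(((Vs i).map φ.toLinearMap).dualCoannihilator) :=
      LinearEquiv.finrank_eq
        ((((Vs i).map φ.toLinearMap).dualCoannihilator).equivMapOfInjective A.subtype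
          (Submodule.injective_subtype A)).symm
    have hle : (((Vs i).map φ.toLinearMap).dualCoannihilator).map A.subtype
        ≤ A ⊓ LinearMap.ker (Enc i) := by
      refine le_inf ?_ (hker i)
      rintro x ⟨y, -, rfl⟩
      exact y.2
    have h4 : Module.finrank F ↥((((Vs i).map φ.toLinearMap).dualCoannihilator).map A.subtype)
        ≤ Module.finrank F ↥(A ⊓ LinearMap.ker (Enc i)) := Submodule.finrank_mono hle
    have htop : (⊤ : Submodule F V) ⊓ Vs i = Vs i := top_inf_eq _
    rw [htop, hdimV]
    have : (Module.finrank F ↥A : ℝ) - (Module.finrank F ↥(Vs i) : ℝ)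
        = (Module.finrank F ↥(((Vs i).map φ.toLinearMap).dualCoannihilator) : ℝ) := by
      have := congrArg (fun m : ℕ => (m : ℝ)) h2
      push_cast at this
      rw [h1] at this
      linarith
    rw [this]
    calc (Module.finrank F ↥(((Vs i).map φ.toLinearMap).dualCoannihilator) : ℝ)
        = (Module.finrank F ↥((((Vs i).map φ.toLinearMap).dualCoannihilator).map A.subtype) : ℝ) := by
          exact_mod_cast h3.symm
      _ ≤ _ := by exact_mod_cast h4
  have hsum : ∑ i, ((Module.finrank F (⊤ : Submodule F V) : ℝ)
      - (Module.finrank F ↥((⊤ : Submodule F V) ⊓ Vs i) : ℝ))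
      ≤ ∑ i, (Module.finrank F ↥(A ⊓ LinearMap.ker (Enc i)) : ℝ) := by
    apply Finset.sum_le_sum
    intro i _
    have := key i
    rw [finrank_top] at *
    exact this
  unfold Phi at hΦ
  rw [finrank_top, hdimV] at hΦ
  have hn' : (0 : ℝ) < (1 / n : ℝ) := by positivity
  simp only [finrank_top, hdimV] at hsum
  have := mul_le_mul_of_nonneg_left hsum (le_of_lt hn')
  linarith
end
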